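/- On H = L²(𝕋) with D = (1/i) d/dθ, the multiplication operator M_{|x|} by the function |x|(θ) = |θ| (for θ ∈ (−π, π]) is weakly D-differentiable with wD(M_{|x|}) = (1/i) M_{sign(x)}, where sign(x)(θ) is the sign of θ; moreover ‖α_t(M_{|x|}) − M_{|x|}‖ = |t| for |t| ≤ π. -/

import Mathlib

open Complex Filter Topology MeasureTheory
open scoped Topology

local notation "⟪" x ", " y "⟫" => @inner ℂ _ _ x y

instance : Fact ((0 : ℝ) < 2 * Real.pi) := ⟨by positivity⟩

/-- The unit circle `𝕋 = ℝ / 2πℤ`. -/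
abbrev Circ : Type := AddCircle (2 * Real.pi)

/-- The Hilbert space `H = L²(𝕋)`. -/
noncomputable abbrev H2 : Type := MeasureTheory.Lp ℂ 2 (volume : Measure Circ)

/-- The function `|x|` on the circle: `θ ↦ |θ|` for `θ ∈ (−π, π]`. -/
noncomputable def absFun : Circ → ℝ :=
  AddCircle.liftIoc (2 * Real.pi) (-Real.pi) (fun x : ℝ => |x|)

/-- The function `sign(x)` on the circle: `θ ↦ sign θ` for `θ ∈ (−π, π]`. -/
noncomputable def signFun : Circ → ℝ :=
  AddCircle.liftIoc (2 * Real.pi) (-Real.pi) (fun x : ℝ => Real.sign x)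

/-- `b` is the bounded operator implementing the commutator form
`(ξ, η) ↦ ⟨aξ, Dη⟩ − ⟨aDξ, η⟩` on `dom D × dom D`, i.e. `a` is weakly
`D`-differentiable with `wD(a) = b`. -/
def IsWeakDeriv (D : H2 →ₗ.[ℂ] H2) (a b : H2 →L[ℂ] H2) : Prop :=
  ∀ ξ η : D.domain, ⟪b (ξ : H2), (η : H2)⟫ = ⟪a (ξ : H2), D η⟫ - ⟪a (D ξ), (η : H2)⟫

/-- `conjAd U t a = U t ∘ a ∘ U (−t)`, i.e. `α_t(a) = e^{itD} a e^{-itD}`. -/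
noncomputable def conjAd (U : ℝ → H2 →L[ℂ] H2) (t : ℝ) (a : H2 →L[ℂ] H2) : H2 →L[ℂ] H2 :=
  (U t).comp (a.comp (U (-t)))

/-- `U` is the strongly continuous one-parameter unitary group `t ↦ e^{itD}`
generated by the self-adjoint operator `D` (Stone's theorem characterization). -/
structure IsStoneGroupOf (D : H2 →ₗ.[ℂ] H2) (U : ℝ → H2 →L[ℂ] H2) : Prop where
  map_zero : U 0 = 1
  map_add : ∀ s t : ℝ, U (s + t) = (U s).comp (U t)
  isometry : ∀ (t : ℝ) (ξ : H2), ‖U t ξ‖ = ‖ξ‖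
  hasDerivAt : ∀ ξ : D.domain, HasDerivAt (fun t : ℝ => U t (ξ : H2)) (Complex.I • D ξ) 0
  mem_domain : ∀ ξ v : H2, HasDerivAt (fun t : ℝ => U t ξ) v 0 → ξ ∈ D.domain

/-- `M` is the multiplication operator by the (bounded) function `g` on `L²(𝕋)`. -/
def IsMulOp (g : Circ → ℝ) (M : H2 →L[ℂ] H2) : Prop :=
  ∀ f : H2, (M f : Circ → ℂ) =ᵐ[volume] fun θ => (g θ : ℂ) * (f : Circ → ℂ) θ

/-- `U t` is translation by `t`: `(e^{itD} f)(θ) = f(θ + t)`, where `D = (1/i) d/dθ`. -/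
def IsTranslation (U : ℝ → H2 →L[ℂ] H2) : Prop :=
  ∀ (t : ℝ) (f : H2), (U t f : Circ → ℂ) =ᵐ[volume]
    fun θ => (f : Circ → ℂ) (θ + (t : Circ))

/-!
Conjugating by the translation group turns the multiplication operator by `g` into
multiplication by `g (· + t)`, and `absFun` is the norm `‖·‖` of the circle. Hence
`⟪α_t(M_{|x|}) ξ, η⟫ = ∫ ‖θ + t‖ ⟪ξ θ, η θ⟫`; since `t ↦ ‖θ + t‖` is 1-Lipschitz with derivative
`sign θ` at `t = 0` for `θ ∉ {0, π}`, dominated convergence gives `⟪M_{sign} ξ, η⟫` as its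
derivative at `0`. For `ξ, η ∈ dom D` the Stone-group axioms compute the same derivative as
`-i (⟪M_{|x|} ξ, D η⟫ - ⟪M_{|x|} D ξ, η⟫)`. Finally `α_t(M_{|x|}) - M_{|x|}` multiplies by the
continuous function `‖θ + t‖ - ‖θ‖`, bounded by `‖t‖ ≤ |t|` and equal to `|t|` at `θ = 0`.
-/

open scoped ENNReal NNReal

section MulOperator

variable {α : Type*} [MeasurableSpace α] {μ : Measure α} {p : ℝ≥0∞} [Fact (1 ≤ p)]
  {T : Lp ℂ p μ →L[ℂ] Lp ℂ p μ} {h : α → ℂ}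

theorem opNorm_le_of_ae_eq_mul (hT : ∀ f : Lp ℂ p μ, T f =ᵐ[μ] fun x => h x * f x)
    {c : ℝ} (hc : 0 ≤ c) (hb : ∀ᵐ x ∂μ, ‖h x‖ ≤ c) : ‖T‖ ≤ c :=
  T.opNorm_le_bound hc fun f => Lp.norm_le_mul_norm_of_ae_le_mul <| by
    filter_upwards [hT f, hb] with x hx hbx
    rw [hx, norm_mul]
    exact mul_le_mul_of_nonneg_right hbx (norm_nonneg _)

theorem le_opNorm_of_ae_eq_mul (hT : ∀ f : Lp ℂ p μ, T f =ᵐ[μ] fun x => h x * f x)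
    (hp0 : p ≠ 0) (hp : p ≠ ∞) {s : Set α} (hs : MeasurableSet s) (hμs0 : μ s ≠ 0)
    (hμs : μ s ≠ ∞) {c : ℝ} (hb : ∀ x ∈ s, c ≤ ‖h x‖) : c ≤ ‖T‖ := by
  obtain hc | hc := le_or_gt c 0
  · exact hc.trans (norm_nonneg T)
  set f : Lp ℂ p μ := indicatorConstLp p hs hμs 1
  have hf : 0 < ‖f‖ := by
    rw [norm_indicatorConstLp hp0 hp, norm_one, one_mul]
    exact Real.rpow_pos_of_pos (ENNReal.toReal_pos hμs0 hμs) _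
  have hcf : ‖(c : ℂ) • f‖ ≤ ‖T f‖ := by
    refine Lp.norm_le_norm_of_ae_le ?_
    filter_upwards [hT f, Lp.coeFn_smul (c : ℂ) f, indicatorConstLp_coeFn (p := p) (hs := hs)
      (hμs := hμs) (c := (1 : ℂ))] with x hTx hcx hfx
    rw [hTx, hcx, Pi.smul_apply, hfx, smul_eq_mul, norm_mul, norm_mul]
    by_cases hx : x ∈ s
    · simp only [Set.indicator_of_mem hx, Complex.norm_real, Real.norm_of_nonneg hc.le]
      exact mul_le_mul_of_nonneg_right (hb x hx) (norm_nonneg _)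
    · simp [Set.indicator_of_notMem hx]
  refine le_of_mul_le_mul_right ?_ hf
  calc c * ‖f‖ = ‖(c : ℂ) • f‖ := by
        rw [norm_smul, Complex.norm_real, Real.norm_of_nonneg hc.le]
    _ ≤ ‖T f‖ := hcf
    _ ≤ ‖T‖ * ‖f‖ := T.le_opNorm f

theorem norm_le_opNorm_of_ae_eq_mul [TopologicalSpace α] [OpensMeasurableSpace α]
    [μ.IsOpenPosMeasure] [IsFiniteMeasure μ]
    (hT : ∀ f : Lp ℂ p μ, T f =ᵐ[μ] fun x => h x * f x) (hp0 : p ≠ 0) (hp : p ≠ ∞)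
    (hh : Continuous h) (x : α) : ‖h x‖ ≤ ‖T‖ := by
  refine le_of_forall_lt_imp_le_of_dense fun c hc => ?_
  have hopen : IsOpen {y | c < ‖h y‖} := isOpen_lt continuous_const hh.norm
  exact le_opNorm_of_ae_eq_mul hT hp0 hp hopen.measurableSet (hopen.measure_ne_zero μ ⟨x, hc⟩)
    (measure_ne_top μ _) fun y hy => le_of_lt hy

end MulOperator

instance AddCircle.nullSingletonClass {T : ℝ} [Fact (0 < T)] :
    NullSingletonClass (volume : Measure (AddCircle T)) :=
  ⟨fun x => by simpa using AddCircle.volume_closedBall T (x := x) 0⟩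

theorem AddCircle.measurable_liftIoc {T : ℝ} [Fact (0 < T)] {a : ℝ} {B : Type*}
    [MeasurableSpace B] {f : ℝ → B} (hf : Measurable f) : Measurable (liftIoc T a f) :=
  (hf.comp measurable_subtype_coe).comp (AddCircle.measurableEquivIoc T a).measurable

theorem Real.measurable_sign : Measurable Real.sign :=
  measurable_const.ite measurableSet_Iio (measurable_const.ite measurableSet_Ioi measurable_const)

theorem Real.sign_eq_coe_sign {x : ℝ} (hx : x ≠ 0) : Real.sign x = (SignType.sign x : ℝ) := by
  rcases hx.lt_or_gt with hx | hx
  · simp [Real.sign_of_neg hx, _root_.sign_neg hx]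
  · simp [Real.sign_of_pos hx, _root_.sign_pos hx]

theorem circ_exists_coe_eq (θ : Circ) : ∃ x ∈ Set.Ioc (-Real.pi) Real.pi, (x : Circ) = θ := by
  obtain ⟨hlo, hhi⟩ := (AddCircle.equivIoc (2 * Real.pi) (-Real.pi) θ).2
  exact ⟨_, ⟨hlo, by linarith⟩, AddCircle.coe_equivIoc⟩

theorem norm_coe_circ_le (x : ℝ) : ‖(x : Circ)‖ ≤ |x| :=
  QuotientAddGroup.norm_mk_le_norm

theorem norm_coe_circ_of_abs_le {x : ℝ} (hx : |x| ≤ Real.pi) : ‖(x : Circ)‖ = |x| :=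
  (AddCircle.norm_coe_eq_abs_iff _ Real.two_pi_pos.ne').2 <| by
    rwa [abs_of_pos Real.two_pi_pos, mul_div_cancel_left₀ _ two_ne_zero]

theorem mem_Ioc_neg_pi_add_two_pi {x : ℝ} (hx : x ∈ Set.Ioc (-Real.pi) Real.pi) :
    x ∈ Set.Ioc (-Real.pi) (-Real.pi + 2 * Real.pi) := by
  rwa [neg_add_eq_sub, two_mul, add_sub_cancel_right]

theorem absFun_eq_norm (θ : Circ) : absFun θ = ‖θ‖ := by
  obtain ⟨x, hx, rfl⟩ := circ_exists_coe_eq θ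
  rw [absFun, AddCircle.liftIoc_coe_apply (mem_Ioc_neg_pi_add_two_pi hx),
    norm_coe_circ_of_abs_le (abs_le.2 ⟨hx.1.le, hx.2⟩)]

theorem signFun_coe {x : ℝ} (hx : x ∈ Set.Ioc (-Real.pi) Real.pi) :
    signFun x = Real.sign x :=
  AddCircle.liftIoc_coe_apply (mem_Ioc_neg_pi_add_two_pi hx)

theorem measurable_signFun : Measurable signFun :=
  AddCircle.measurable_liftIoc Real.measurable_sign

theorem abs_absFun_le_pi (θ : Circ) : |absFun θ| ≤ Real.pi := by
  simpa [absFun_eq_norm, abs_of_pos Real.two_pi_pos] using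
    AddCircle.norm_le_half_period (2 * Real.pi) (x := θ) Real.two_pi_pos.ne'

theorem abs_absFun_add_sub_absFun_add_le (θ : Circ) (s t : ℝ) :
    |absFun (θ + s) - absFun (θ + t)| ≤ |s - t| := by
  simp only [absFun_eq_norm]
  calc |‖θ + s‖ - ‖θ + t‖| ≤ ‖θ + s - (θ + t)‖ := abs_norm_sub_norm_le _ _
    _ = ‖((s - t : ℝ) : Circ)‖ := by rw [add_sub_add_left_eq_sub, AddCircle.coe_sub]
    _ ≤ |s - t| := norm_coe_circ_le _

theorem hasDerivAt_absFun_coe_add {x : ℝ} (hx : |x| < Real.pi) (hx0 : x ≠ 0) :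
    HasDerivAt (fun t : ℝ => absFun (x + t)) (Real.sign x) 0 := by
  have hnear : ∀ᶠ t in 𝓝 (0 : ℝ), |x + t| < Real.pi :=
    ContinuousAt.eventually_lt (by fun_prop) continuousAt_const (by simpa using hx)
  have hloc : (fun t : ℝ => |x + t|) =ᶠ[𝓝 0] fun t => absFun (x + t) := by
    filter_upwards [hnear] with t ht
    rw [absFun_eq_norm, ← AddCircle.coe_add, norm_coe_circ_of_abs_le ht.le]
  rw [Real.sign_eq_coe_sign hx0]
  refine (HasDerivAt.comp_const_add x 0 ?_).congr_of_eventuallyEq hloc.symm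
  rw [add_zero]
  exact hasDerivAt_abs hx0

theorem ae_hasDerivAt_absFun_add :
    ∀ᵐ θ : Circ, HasDerivAt (fun t : ℝ => absFun (θ + t)) (signFun θ) 0 := by
  filter_upwards [Measure.ae_ne volume ((0 : ℝ) : Circ),
    Measure.ae_ne volume ((Real.pi : ℝ) : Circ)] with θ h0 hpi
  obtain ⟨x, hx, rfl⟩ := circ_exists_coe_eq θ
  have hx0 : x ≠ 0 := by rintro rfl; exact h0 rfl
  have hxpi : x < Real.pi := hx.2.lt_of_ne (by rintro rfl; exact hpi rfl)
  rw [signFun_coe hx]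
  exact hasDerivAt_absFun_coe_add (abs_lt.2 ⟨hx.1, hxpi⟩) hx0

namespace IsMulOp

variable {g g' : Circ → ℝ} {M M' : H2 →L[ℂ] H2}

theorem sub (hM : IsMulOp g M) (hM' : IsMulOp g' M') :
    IsMulOp (fun θ => g θ - g' θ) (M - M') := fun f => by
  filter_upwards [Lp.coeFn_sub (M f) (M' f), hM f, hM' f] with θ hsub hθ hθ'
  rw [sub_apply, hsub, Pi.sub_apply, hθ, hθ', Complex.ofReal_sub, sub_mul]

theorem conjAd {U : ℝ → H2 →L[ℂ] H2} (hU : IsTranslation U) (hM : IsMulOp g M) (t : ℝ) :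
    IsMulOp (fun θ => g (θ + t)) (_root_.conjAd U t M) := fun f => by
  have hshift : MeasurePreserving (fun θ : Circ => θ + t) volume volume :=
    measurePreserving_add_right volume _
  filter_upwards [hU t (M (U (-t) f)),
    hshift.quasiMeasurePreserving.ae_eq_comp (hM (U (-t) f)),
    hshift.quasiMeasurePreserving.ae_eq_comp (hU (-t) f)] with θ hUθ hMθ hUθ'
  simp only [Function.comp_apply] at hMθ hUθ'
  rw [_root_.conjAd, ContinuousLinearMap.comp_apply, ContinuousLinearMap.comp_apply, hUθ, hMθ,
    hUθ', AddCircle.coe_neg, add_neg_cancel_right]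

theorem inner_apply (hM : IsMulOp g M) (ξ η : H2) :
    ⟪M ξ, η⟫ = ∫ θ, (g θ : ℂ) * ⟪ξ θ, η θ⟫ := by
  rw [L2.inner_def]
  refine integral_congr_ae ?_
  filter_upwards [hM ξ] with θ hθ
  rw [hθ, RCLike.inner_apply, RCLike.inner_apply, map_mul, Complex.conj_ofReal]
  ring

end IsMulOp

theorem norm_conjAd_mulOp_absFun_sub {U : ℝ → H2 →L[ℂ] H2} (hU : IsTranslation U)
    {M : H2 →L[ℂ] H2} (hM : IsMulOp absFun M) {t : ℝ} (ht : |t| ≤ Real.pi) :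
    ‖conjAd U t M - M‖ = |t| := by
  have hdiff := (hM.conjAd hU t).sub hM
  refine le_antisymm (opNorm_le_of_ae_eq_mul hdiff (abs_nonneg t) (ae_of_all _ fun θ => ?_)) ?_
  · rw [Complex.norm_real, Real.norm_eq_abs]
    simpa using abs_absFun_add_sub_absFun_add_le θ t 0
  · have hcont : Continuous fun θ : Circ => ((absFun (θ + t) - absFun θ : ℝ) : ℂ) := by
      simp only [absFun_eq_norm]
      fun_prop
    simpa [absFun_eq_norm, norm_coe_circ_of_abs_le ht] using
      norm_le_opNorm_of_ae_eq_mul hdiff two_ne_zero ENNReal.ofNat_ne_top hcont 0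

namespace IsStoneGroupOf

variable {D : H2 →ₗ.[ℂ] H2} {U : ℝ → H2 →L[ℂ] H2}

theorem apply_apply_neg (hU : IsStoneGroupOf D U) (t : ℝ) (x : H2) : U t (U (-t) x) = x := by
  rw [← ContinuousLinearMap.comp_apply, ← hU.map_add, add_neg_cancel, hU.map_zero,
    one_apply_eq_self]

theorem inner_apply_left (hU : IsStoneGroupOf D U) (t : ℝ) (x y : H2) :
    ⟪U t x, y⟫ = ⟪x, U (-t) y⟫ := by
  conv_lhs => rw [← hU.apply_apply_neg t y]
  exact LinearIsometry.inner_map_map ⟨(U t : H2 →ₗ[ℂ] H2), hU.isometry t⟩ x (U (-t) y)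

theorem inner_conjAd_apply (hU : IsStoneGroupOf D U) (t : ℝ) (A : H2 →L[ℂ] H2) (x y : H2) :
    ⟪conjAd U t A x, y⟫ = ⟪A (U (-t) x), U (-t) y⟫ :=
  hU.inner_apply_left t _ _

theorem hasDerivAt_apply_neg (hU : IsStoneGroupOf D U) (ξ : D.domain) :
    HasDerivAt (fun t : ℝ => U (-t) ξ) (-(Complex.I • D ξ)) 0 := by
  have h := (hU.hasDerivAt ξ).scomp_of_eq (0 : ℝ) (hasDerivAt_neg 0) neg_zero.symm
  rw [neg_one_smul] at h
  exact h

theorem hasDerivAt_inner_conjAd (hU : IsStoneGroupOf D U) (A : H2 →L[ℂ] H2)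
    (ξ η : D.domain) :
    HasDerivAt (fun t => ⟪conjAd U t A ξ, η⟫)
      (-Complex.I * (⟪A ξ, D η⟫ - ⟪A (D ξ), η⟫)) 0 := by
  have hA :=
    (A.restrictScalars ℝ).hasFDerivAt.comp_hasDerivAt (0 : ℝ) (hU.hasDerivAt_apply_neg ξ)
  have h := hA.inner ℂ (hU.hasDerivAt_apply_neg η)
  simp only [Function.comp_def, ContinuousLinearMap.coe_restrictScalars', neg_zero,
    hU.map_zero, one_apply_eq_self] at h
  simp only [hU.inner_conjAd_apply]
  refine h.congr_deriv ?_
  simp only [map_neg, map_smul, inner_neg_left, inner_neg_right, inner_smul_left,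
    inner_smul_right, Complex.conj_I]
  ring

theorem isWeakDeriv_of_hasDerivAt_inner_conjAd (hU : IsStoneGroupOf D U) {A B : H2 →L[ℂ] H2}
    (h : ∀ ξ η : D.domain, HasDerivAt (fun t => ⟪conjAd U t A ξ, η⟫) ⟪B ξ, η⟫ 0) :
    IsWeakDeriv D A ((-Complex.I) • B) := fun ξ η => by
  rw [smul_apply, inner_smul_left,
    (h ξ η).unique (hU.hasDerivAt_inner_conjAd A ξ η)]
  simp only [map_neg, Complex.conj_I, neg_neg, ← mul_assoc, mul_neg, Complex.I_mul_I, one_mul]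

end IsStoneGroupOf

theorem hasDerivAt_integral_absFun_add_mul {ψ : Circ → ℂ} (hψ : Integrable ψ) :
    HasDerivAt (fun t : ℝ => ∫ θ, (absFun (θ + t) : ℂ) * ψ θ)
      (∫ θ, (signFun θ : ℂ) * ψ θ) 0 := by
  have hcont (t : ℝ) : Continuous fun θ : Circ => (absFun (θ + t) : ℂ) := by
    simp only [absFun_eq_norm]
    fun_prop
  have hlip (θ : Circ) : LipschitzWith ‖ψ θ‖₊ fun t : ℝ => (absFun (θ + t) : ℂ) * ψ θ := by
    refine LipschitzWith.of_dist_le_mul fun s t => ?_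
    rw [dist_eq_norm, ← sub_mul, ← Complex.ofReal_sub, norm_mul, Complex.norm_real,
      Real.norm_eq_abs, coe_nnnorm, mul_comm, Real.dist_eq]
    exact mul_le_mul_of_nonneg_left (abs_absFun_add_sub_absFun_add_le θ s t) (norm_nonneg _)
  refine (hasDerivAt_integral_of_dominated_loc_of_lip
    (F := fun (t : ℝ) θ => (absFun (θ + t) : ℂ) * ψ θ) (bound := fun θ => ‖ψ θ‖) univ_mem
    (Eventually.of_forall fun t => (hcont t).aestronglyMeasurable.mul hψ.1) ?_
    ((Complex.measurable_ofReal.comp measurable_signFun).aestronglyMeasurable.mul hψ.1)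
    (ae_of_all _ fun θ => ?_) hψ.norm ?_).2
  · refine hψ.bdd_mul (c := Real.pi) (hcont 0).aestronglyMeasurable (ae_of_all _ fun θ => ?_)
    rw [Complex.norm_real, Real.norm_eq_abs]
    exact abs_absFun_le_pi _
  · rw [Real.nnabs_of_nonneg (norm_nonneg _), norm_toNNReal]
    exact (hlip θ).lipschitzOnWith
  · filter_upwards [ae_hasDerivAt_absFun_add] with θ hθ
    exact hθ.ofReal_comp.mul_const (ψ θ)

theorem hasDerivAt_inner_conjAd_mulOp_absFun {U : ℝ → H2 →L[ℂ] H2} (hU : IsTranslation U)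
    {Mabs Msign : H2 →L[ℂ] H2} (hMabs : IsMulOp absFun Mabs) (hMsign : IsMulOp signFun Msign)
    (ξ η : H2) : HasDerivAt (fun t => ⟪conjAd U t Mabs ξ, η⟫) ⟪Msign ξ, η⟫ 0 := by
  rw [funext fun t => (hMabs.conjAd hU t).inner_apply ξ η, hMsign.inner_apply]
  exact hasDerivAt_integral_absFun_add_mul (L2.integrable_inner ξ η)

theorem absFun_mulOp_weakly_differentiable_general
    (D : H2 →ₗ.[ℂ] H2)
    (U : ℝ → H2 →L[ℂ] H2) (hU : IsStoneGroupOf D U) (hUt : IsTranslation U)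
    (Mabs Msign : H2 →L[ℂ] H2)
    (hMabs : IsMulOp absFun Mabs) (hMsign : IsMulOp signFun Msign) :
    IsWeakDeriv D Mabs ((-Complex.I) • Msign) ∧
      ∀ t : ℝ, |t| ≤ Real.pi → ‖conjAd U t Mabs - Mabs‖ = |t| :=
  ⟨hU.isWeakDeriv_of_hasDerivAt_inner_conjAd fun ξ η =>
      hasDerivAt_inner_conjAd_mulOp_absFun hUt hMabs hMsign ξ η,
    fun _ ht => norm_conjAd_mulOp_absFun_sub hUt hMabs ht⟩

/-- On `L²(𝕋)` with `D = (1/i) d/dθ`, the multiplication operator `M_{|x|}` is weakly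
`D`-differentiable with `wD(M_{|x|}) = (1/i) M_{sign(x)} = −i M_{sign(x)}`, and
`‖α_t(M_{|x|}) − M_{|x|}‖ = |t|` for `|t| ≤ π`. -/
theorem absFun_mulOp_weakly_differentiable
    (D : H2 →ₗ.[ℂ] H2) (hD : IsSelfAdjoint D)
    (U : ℝ → H2 →L[ℂ] H2) (hU : IsStoneGroupOf D U) (hUt : IsTranslation U)
    (Mabs Msign : H2 →L[ℂ] H2)
    (hMabs : IsMulOp absFun Mabs) (hMsign : IsMulOp signFun Msign) :
    IsWeakDeriv D Mabs ((-Complex.I) • Msign) ∧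
      ∀ t : ℝ, |t| ≤ Real.pi → ‖conjAd U t Mabs - Mabs‖ = |t| :=
  absFun_mulOp_weakly_differentiable_general D U hU hUt Mabs Msign hMabs hMsign
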